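/- Suppose the Euler–Lagrange equation at the zero function holds: f_y(x,0,0) − (d/dx)[f_z(x,0,0)] = 0 for all x ∈ [a,b]. If p > 0, q < 0, and b − a < (π/4)·√(p/|q|), then there exists ε > 0 such that for every y ∈ C¹[a,b] with y(a)=y(b)=0 and max_{x∈[a,b]} max(|y(x)|,|y'(x)|) < ε one has Φ(y) − Φ(0) ≥ ((π²·p − 16(b−a)²·|q|) / (2(π² + 16(b−a)²)))·‖y‖²_{H¹[a,b]}. -/

import Mathlib

open Set MeasureTheory intervalIntegral

/-- Partial derivative of `f` with respect to the second argument `y`. -/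
noncomputable def fy (f : ℝ → ℝ → ℝ → ℝ) (x y z : ℝ) : ℝ :=
  deriv (fun u => f x u z) y

/-- Partial derivative of `f` with respect to the third argument `z`. -/
noncomputable def fz (f : ℝ → ℝ → ℝ → ℝ) (x y z : ℝ) : ℝ :=
  deriv (fun u => f x y u) z

/-- Second partial derivative `f_{yy}`. -/
noncomputable def fyy (f : ℝ → ℝ → ℝ → ℝ) (x y z : ℝ) : ℝ :=
  deriv (fun u => fy f x u z) y

/-- Mixed second partial derivative `f_{yz}`. -/
noncomputable def fyz (f : ℝ → ℝ → ℝ → ℝ) (x y z : ℝ) : ℝ :=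
  deriv (fun u => fz f x u z) y

/-- Second partial derivative `f_{zz}`. -/
noncomputable def fzz (f : ℝ → ℝ → ℝ → ℝ) (x y z : ℝ) : ℝ :=
  deriv (fun u => fz f x y u) z

/-- The Euler–Lagrange variational functional `Φ(y) = ∫_a^b f(x, y, y') dx`. -/
noncomputable def Phi (f : ℝ → ℝ → ℝ → ℝ) (a b : ℝ) (y : ℝ → ℝ) : ℝ :=
  ∫ x in a..b, f x (y x) (deriv y x)

/-- The square of the Sobolev `H¹[a,b]` norm of `y`. -/
noncomputable def H1normSq (a b : ℝ) (y : ℝ → ℝ) : ℝ :=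
  ∫ x in a..b, ((y x) ^ 2 + (deriv y x) ^ 2)

/-!
Expanding `f` to second order around `(x, 0, 0)`, uniformly for `x ∈ [a, b]` (the second
derivative is uniformly continuous near that compact segment), bounds `Φ(y) - Φ(0)` below by the
first variation plus half the second variation, up to an error `η ‖y‖²_{H¹} / 2` with `η` as small
as we like once `|y|, |y'| < ε`. The first variation vanishes by the Euler–Lagrange equation after
an integration by parts, and integrating the cross term `f_yz · (y²)'` by parts puts the second
variation in Legendre form `∫ (f_yy - (f_yz)') y² + f_zz y'² ≥ q ‖y‖² + p ‖y'‖²`. With the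
Poincaré inequality `‖y‖² ≤ (b - a)² ‖y'‖²` and `π² < 16` this exceeds the stated multiple of
`‖y‖²_{H¹}` by a positive multiple of `‖y‖²_{H¹}`, which absorbs the error for small `η`.
-/

def uncurry3 (f : ℝ → ℝ → ℝ → ℝ) (pt : ℝ × ℝ × ℝ) : ℝ := f pt.1 pt.2.1 pt.2.2

theorem add_add_half_le_of_le_deriv2 {φ φ' φ'' : ℝ → ℝ} {m : ℝ}
    (hφ : ∀ t, HasDerivAt φ (φ' t) t) (hφ' : ∀ t, HasDerivAt φ' (φ'' t) t)
    (hm : ∀ t ∈ Icc (0 : ℝ) 1, m ≤ φ'' t) :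
    φ 0 + φ' 0 + m / 2 ≤ φ 1 := by
  have hint : interior (Icc (0 : ℝ) 1) = Ioo 0 1 := interior_Icc
  have hslope : MonotoneOn (fun t => φ' t - t * m) (Icc 0 1) := by
    have hd : ∀ t, HasDerivAt (fun t => φ' t - t * m) (φ'' t - m) t :=
      fun t => (hφ' t).sub (hasDerivAt_mul_const m)
    refine monotoneOn_of_hasDerivWithinAt_nonneg (convex_Icc 0 1)
      (fun t _ => (hd t).continuousAt.continuousWithinAt) (fun t _ => (hd t).hasDerivWithinAt) ?_
    rw [hint]
    exact fun t ht => sub_nonneg.2 (hm t (Ioo_subset_Icc_self ht))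
  have hval : MonotoneOn (fun t => φ t - t * φ' 0 - m * t ^ 2 / 2) (Icc 0 1) := by
    have hd : ∀ t, HasDerivAt (fun t => φ t - t * φ' 0 - m * t ^ 2 / 2)
        (φ' t - t * m - (φ' 0 - 0 * m)) t := fun t => by
      refine (((hφ t).sub (hasDerivAt_mul_const (φ' 0))).sub
        (((hasDerivAt_pow 2 t).const_mul m).div_const 2)).congr_deriv ?_
      push_cast
      ring
    refine monotoneOn_of_hasDerivWithinAt_nonneg (convex_Icc 0 1)
      (fun t _ => (hd t).continuousAt.continuousWithinAt) (fun t _ => (hd t).hasDerivWithinAt) ?_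
    rw [hint]
    exact fun t ht => sub_nonneg.2 <| hslope (left_mem_Icc.2 zero_le_one)
      (Ioo_subset_Icc_self ht) ht.1.le
  have := hval (left_mem_Icc.2 zero_le_one) (right_mem_Icc.2 zero_le_one) zero_le_one
  simp only at this
  linarith

section Taylor

variable {E : Type*} [NormedAddCommGroup E] [NormedSpace ℝ E] {F : E → ℝ}

theorem add_fderiv_add_half_sub_le (hF : ContDiff ℝ 2 F) {x w : E} {η : ℝ}
    (hη : ∀ t ∈ Icc (0 : ℝ) 1,
      ‖fderiv ℝ (fderiv ℝ F) (x + t • w) - fderiv ℝ (fderiv ℝ F) x‖ ≤ η) :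
    F x + fderiv ℝ F x w + (fderiv ℝ (fderiv ℝ F) x w w - η * ‖w‖ ^ 2) / 2 ≤ F (x + w) := by
  have hline : ∀ t : ℝ, HasDerivAt (fun t : ℝ => x + t • w) w t := fun t => by
    simpa using ((hasDerivAt_id t).smul_const w).const_add x
  have hF1 : Differentiable ℝ F := hF.differentiable two_ne_zero
  have hF2 : Differentiable ℝ (fderiv ℝ F) :=
    (hF.fderiv_right one_add_one_eq_two.le).differentiable one_ne_zero
  have key := add_add_half_le_of_le_deriv2 (φ := fun t => F (x + t • w))
    (φ' := fun t => fderiv ℝ F (x + t • w) w)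
    (φ'' := fun t => fderiv ℝ (fderiv ℝ F) (x + t • w) w w)
    (m := fderiv ℝ (fderiv ℝ F) x w w - η * ‖w‖ ^ 2)
    (fun t => (hF1 _).hasFDerivAt.comp_hasDerivAt t (hline t))
    (fun t => by
      simpa using ((hF2 _).hasFDerivAt.comp_hasDerivAt t (hline t)).clm_apply
        (hasDerivAt_const t w))
    (fun t ht => by
      have hle := ((fderiv ℝ (fderiv ℝ F) (x + t • w) - fderiv ℝ (fderiv ℝ F) x)).le_opNorm₂ w w
      have hsq : ‖fderiv ℝ (fderiv ℝ F) (x + t • w) - fderiv ℝ (fderiv ℝ F) x‖ * ‖w‖ * ‖w‖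
          ≤ η * ‖w‖ ^ 2 := by
        rw [mul_assoc, ← sq]; gcongr; exact hη t ht
      simp only [sub_apply, Real.norm_eq_abs] at hle
      linarith [neg_abs_le (fderiv ℝ (fderiv ℝ F) (x + t • w) w w - fderiv ℝ (fderiv ℝ F) x w w)])
  simpa using key

theorem exists_pos_forall_add_fderiv_add_half_sub_le (hF : ContDiff ℝ 2 F) {K : Set E}
    (hK : IsCompact K) {η : ℝ} (hη : 0 < η) :
    ∃ δ > 0, ∀ x ∈ K, ∀ w : E, ‖w‖ < δ →
      F x + fderiv ℝ F x w + (fderiv ℝ (fderiv ℝ F) x w w - η * ‖w‖ ^ 2) / 2 ≤ F (x + w) := by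
  have hcont : Continuous (fderiv ℝ (fderiv ℝ F)) :=
    (hF.fderiv_right one_add_one_eq_two.le).continuous_fderiv one_ne_zero
  -- `@`: the uniformity of `E →L[ℝ] _` is the metric one only up to unfolding
  have hr : {p : (E →L[ℝ] E →L[ℝ] ℝ) × (E →L[ℝ] E →L[ℝ] ℝ) | dist p.1 p.2 < η} ∈
      uniformity (E →L[ℝ] E →L[ℝ] ℝ) :=
    @Metric.dist_mem_uniformity (E →L[ℝ] E →L[ℝ] ℝ) _ η hη
  obtain ⟨δ, hδ, hunif⟩ := Metric.mem_uniformity_dist.1 <|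
    hK.uniformContinuousAt_of_continuousAt _ (fun x _ => hcont.continuousAt) hr
  refine ⟨δ, hδ, fun x hx w hw => add_fderiv_add_half_sub_le hF fun t ht => ?_⟩
  have hdist : dist x (x + t • w) < δ := by
    rw [dist_self_add_right, norm_smul, Real.norm_of_nonneg ht.1]
    exact lt_of_le_of_lt (mul_le_of_le_one_left (norm_nonneg w) ht.2) hw
  have h : dist (fderiv ℝ (fderiv ℝ F) x) (fderiv ℝ (fderiv ℝ F) (x + t • w)) < η :=
    hunif hdist hx
  rw [dist_comm, dist_eq_norm (fderiv ℝ (fderiv ℝ F) (x + t • w))] at h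
  exact h.le

end Taylor

section Partials

variable {W : Type*} [NormedAddCommGroup W] [NormedSpace ℝ W]

theorem hasDerivAt_comp_mk_middle {g : ℝ × ℝ × ℝ → W} {x y z : ℝ}
    (hg : DifferentiableAt ℝ g (x, y, z)) :
    HasDerivAt (fun u => g (x, u, z)) (fderiv ℝ g (x, y, z) (0, 1, 0)) y :=
  hg.hasFDerivAt.comp_hasDerivAt y
    ((hasDerivAt_const y x).prodMk ((hasDerivAt_id y).prodMk (hasDerivAt_const y z)))

theorem hasDerivAt_comp_mk_last {g : ℝ × ℝ × ℝ → W} {x y z : ℝ}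
    (hg : DifferentiableAt ℝ g (x, y, z)) :
    HasDerivAt (fun w => g (x, y, w)) (fderiv ℝ g (x, y, z) (0, 0, 1)) z :=
  hg.hasFDerivAt.comp_hasDerivAt z
    ((hasDerivAt_const z x).prodMk ((hasDerivAt_const z y).prodMk (hasDerivAt_id z)))

variable {f : ℝ → ℝ → ℝ → ℝ}

theorem fy_eq_fderiv (hf : Differentiable ℝ (uncurry3 f)) (x y z : ℝ) :
    fy f x y z = fderiv ℝ (uncurry3 f) (x, y, z) (0, 1, 0) :=
  (hasDerivAt_comp_mk_middle (hf _)).deriv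

theorem fz_eq_fderiv (hf : Differentiable ℝ (uncurry3 f)) (x y z : ℝ) :
    fz f x y z = fderiv ℝ (uncurry3 f) (x, y, z) (0, 0, 1) :=
  (hasDerivAt_comp_mk_last (hf _)).deriv

theorem contDiff_fderiv_uncurry3 (hf : ContDiff ℝ 2 (uncurry3 f)) :
    ContDiff ℝ 1 (fderiv ℝ (uncurry3 f)) :=
  hf.fderiv_right one_add_one_eq_two.le

theorem fyy_eq_fderiv_fderiv (hf : ContDiff ℝ 2 (uncurry3 f)) (x y z : ℝ) :
    fyy f x y z = fderiv ℝ (fderiv ℝ (uncurry3 f)) (x, y, z) (0, 1, 0) (0, 1, 0) := by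
  simp only [fyy, fy_eq_fderiv (hf.differentiable two_ne_zero)]
  have hF' := (contDiff_fderiv_uncurry3 hf).differentiable one_ne_zero
  simpa using ((hasDerivAt_comp_mk_middle (hF' _)).clm_apply
    (hasDerivAt_const y ((0 : ℝ), (1 : ℝ), (0 : ℝ)))).deriv

theorem fyz_eq_fderiv_fderiv (hf : ContDiff ℝ 2 (uncurry3 f)) (x y z : ℝ) :
    fyz f x y z = fderiv ℝ (fderiv ℝ (uncurry3 f)) (x, y, z) (0, 1, 0) (0, 0, 1) := by
  simp only [fyz, fz_eq_fderiv (hf.differentiable two_ne_zero)]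
  have hF' := (contDiff_fderiv_uncurry3 hf).differentiable one_ne_zero
  simpa using ((hasDerivAt_comp_mk_middle (hF' _)).clm_apply
    (hasDerivAt_const y ((0 : ℝ), (0 : ℝ), (1 : ℝ)))).deriv

theorem fzz_eq_fderiv_fderiv (hf : ContDiff ℝ 2 (uncurry3 f)) (x y z : ℝ) :
    fzz f x y z = fderiv ℝ (fderiv ℝ (uncurry3 f)) (x, y, z) (0, 0, 1) (0, 0, 1) := by
  simp only [fzz, fz_eq_fderiv (hf.differentiable two_ne_zero)]
  have hF' := (contDiff_fderiv_uncurry3 hf).differentiable one_ne_zero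
  simpa using ((hasDerivAt_comp_mk_last (hF' _)).clm_apply
    (hasDerivAt_const z ((0 : ℝ), (0 : ℝ), (1 : ℝ)))).deriv

theorem mk_zero_eq_smul_add_smul (u v : ℝ) :
    ((0 : ℝ), u, v) = u • ((0 : ℝ), (1 : ℝ), (0 : ℝ)) + v • ((0 : ℝ), (0 : ℝ), (1 : ℝ)) := by
  simp

theorem fderiv_uncurry3_apply (hf : Differentiable ℝ (uncurry3 f)) (x y z u v : ℝ) :
    fderiv ℝ (uncurry3 f) (x, y, z) (0, u, v) = fy f x y z * u + fz f x y z * v := by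
  rw [mk_zero_eq_smul_add_smul, map_add, map_smul, map_smul, fy_eq_fderiv hf,
    fz_eq_fderiv hf, smul_eq_mul, smul_eq_mul, mul_comm u, mul_comm v]

theorem fderiv_fderiv_uncurry3_apply (hf : ContDiff ℝ 2 (uncurry3 f)) (x y z u v : ℝ) :
    fderiv ℝ (fderiv ℝ (uncurry3 f)) (x, y, z) (0, u, v) (0, u, v) =
      fyy f x y z * u ^ 2 + 2 * fyz f x y z * (u * v) + fzz f x y z * v ^ 2 := by
  have hsymm := (hf.contDiffAt (x := (x, y, z))).isSymmSndFDerivAt (by simp)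
    ((0 : ℝ), (0 : ℝ), (1 : ℝ)) ((0 : ℝ), (1 : ℝ), (0 : ℝ))
  rw [fyy_eq_fderiv_fderiv hf, fyz_eq_fderiv_fderiv hf, fzz_eq_fderiv_fderiv hf,
    mk_zero_eq_smul_add_smul]
  simp only [map_add, map_smul, add_apply, smul_apply, smul_eq_mul, hsymm]
  ring

theorem exists_pos_forall_partials_taylor_le (hf : ContDiff ℝ 2 (uncurry3 f)) (a b : ℝ)
    {η : ℝ} (hη : 0 < η) :
    ∃ δ > 0, ∀ x ∈ Icc a b, ∀ u v : ℝ, max |u| |v| < δ →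
      fy f x 0 0 * u + fz f x 0 0 * v
        + (fyy f x 0 0 * u ^ 2 + 2 * fyz f x 0 0 * (u * v) + fzz f x 0 0 * v ^ 2) / 2
        - η / 2 * (u ^ 2 + v ^ 2) ≤ f x u v - f x 0 0 := by
  obtain ⟨δ, hδ, htaylor⟩ := exists_pos_forall_add_fderiv_add_half_sub_le hf
    ((isCompact_Icc (a := a) (b := b)).image (f := fun x => (x, (0 : ℝ), (0 : ℝ)))
      (by fun_prop)) hη
  refine ⟨δ, hδ, fun x hx u v huv => ?_⟩
  have hw : ‖((0 : ℝ), u, v)‖ = max |u| |v| := by simp [Prod.norm_def]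
  have hsq : max |u| |v| ^ 2 ≤ u ^ 2 + v ^ 2 := by
    rcases max_cases |u| |v| with ⟨h, -⟩ | ⟨h, -⟩ <;> rw [h, sq_abs] <;> nlinarith
  have key := htaylor _ (mem_image_of_mem _ hx) ((0 : ℝ), u, v) (hw ▸ huv)
  rw [fderiv_uncurry3_apply (hf.differentiable two_ne_zero),
    fderiv_fderiv_uncurry3_apply hf, hw] at key
  have hsum : ((x, (0 : ℝ), (0 : ℝ)) + ((0 : ℝ), u, v) : ℝ × ℝ × ℝ) = (x, u, v) := by simp
  simp only [hsum, uncurry3] at key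
  nlinarith

theorem continuous_uncurry3_fy (hf : ContDiff ℝ 1 (uncurry3 f)) :
    Continuous (uncurry3 (fy f)) := by
  have : uncurry3 (fy f) = fun pt => fderiv ℝ (uncurry3 f) pt (0, 1, 0) :=
    funext fun pt => fy_eq_fderiv (hf.differentiable one_ne_zero) pt.1 pt.2.1 pt.2.2
  rw [this]
  exact (hf.continuous_fderiv one_ne_zero).clm_apply continuous_const

theorem contDiff_uncurry3_fz (hf : ContDiff ℝ 2 (uncurry3 f)) :
    ContDiff ℝ 1 (uncurry3 (fz f)) := by
  have : uncurry3 (fz f) = fun pt => fderiv ℝ (uncurry3 f) pt (0, 0, 1) :=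
    funext fun pt => fz_eq_fderiv (hf.differentiable two_ne_zero) pt.1 pt.2.1 pt.2.2
  rw [this]
  exact (contDiff_fderiv_uncurry3 hf).clm_apply contDiff_const

theorem continuous_fderiv_fderiv_uncurry3 (hf : ContDiff ℝ 2 (uncurry3 f)) :
    Continuous (fderiv ℝ (fderiv ℝ (uncurry3 f))) :=
  (contDiff_fderiv_uncurry3 hf).continuous_fderiv one_ne_zero

theorem continuous_uncurry3_fyy (hf : ContDiff ℝ 2 (uncurry3 f)) :
    Continuous (uncurry3 (fyy f)) := by
  have : uncurry3 (fyy f) = fun pt => fderiv ℝ (fderiv ℝ (uncurry3 f)) pt (0, 1, 0) (0, 1, 0) :=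
    funext fun pt => fyy_eq_fderiv_fderiv hf pt.1 pt.2.1 pt.2.2
  rw [this]
  exact ((continuous_fderiv_fderiv_uncurry3 hf).clm_apply continuous_const).clm_apply
    continuous_const

theorem continuous_uncurry3_fzz (hf : ContDiff ℝ 2 (uncurry3 f)) :
    Continuous (uncurry3 (fzz f)) := by
  have : uncurry3 (fzz f) = fun pt => fderiv ℝ (fderiv ℝ (uncurry3 f)) pt (0, 0, 1) (0, 0, 1) :=
    funext fun pt => fzz_eq_fderiv_fderiv hf pt.1 pt.2.1 pt.2.2
  rw [this]
  exact ((continuous_fderiv_fderiv_uncurry3 hf).clm_apply continuous_const).clm_apply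
    continuous_const

end Partials

section Integrals

variable {a b : ℝ}

theorem deriv_fun_sq_of_contDiff {y : ℝ → ℝ} (hy : ContDiff ℝ 1 y) :
    deriv (fun x => y x ^ 2) = fun x => 2 * y x * deriv y x := funext fun x => by
  rw [deriv_fun_pow (hy.differentiable one_ne_zero x)]
  push_cast
  ring

theorem integral_deriv_mul_eq_zero {u v : ℝ → ℝ} (hu : ContDiff ℝ 1 u) (hv : ContDiff ℝ 1 v)
    (ha : v a = 0) (hb : v b = 0) :
    ∫ x in a..b, (deriv u x * v x + u x * deriv v x) = 0 := by
  rw [integral_deriv_mul_eq_sub (fun x _ => (hu.differentiable one_ne_zero x).hasDerivAt)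
    (fun x _ => (hv.differentiable one_ne_zero x).hasDerivAt)
    ((hu.continuous_deriv le_rfl).intervalIntegrable _ _)
    ((hv.continuous_deriv le_rfl).intervalIntegrable _ _), ha, hb]
  ring

theorem integral_taylor_poly_eq_legendre {A B P R S y : ℝ → ℝ} (hB : ContDiff ℝ 1 B)
    (hP : Continuous P) (hR : ContDiff ℝ 1 R) (hS : Continuous S) (hy : ContDiff ℝ 1 y)
    (hAB : ∀ x ∈ uIcc a b, A x = deriv B x) (ha : y a = 0) (hb : y b = 0) :
    ∫ x in a..b, (A x * y x + B x * deriv y x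
      + (P x * y x ^ 2 + 2 * R x * (y x * deriv y x) + S x * deriv y x ^ 2) / 2) =
      (∫ x in a..b, ((P x - deriv R x) * y x ^ 2 + S x * deriv y x ^ 2)) / 2 := by
  have hy' := hy.continuous_deriv le_rfl
  have hB' := hB.continuous_deriv le_rfl
  have hR' := hR.continuous_deriv le_rfl
  have hy2 : ContDiff ℝ 1 (fun x => y x ^ 2) := hy.pow 2
  have hfirst := integral_deriv_mul_eq_zero hB hy ha hb
  have hcross := integral_deriv_mul_eq_zero (a := a) (b := b) hR hy2 (by simp [ha])
    (by simp [hb])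
  simp only [deriv_fun_sq_of_contDiff hy] at hcross
  have hsplit : ∀ x ∈ uIcc a b, A x * y x + B x * deriv y x
      + (P x * y x ^ 2 + 2 * R x * (y x * deriv y x) + S x * deriv y x ^ 2) / 2 =
      (deriv B x * y x + B x * deriv y x)
      + ((deriv R x * y x ^ 2 + R x * (2 * y x * deriv y x)) / 2
      + ((P x - deriv R x) * y x ^ 2 + S x * deriv y x ^ 2) / 2) := fun x hx => by
    rw [hAB x hx]; ring
  rw [intervalIntegral.integral_congr hsplit,
    intervalIntegral.integral_add (by apply Continuous.intervalIntegrable; fun_prop)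
      (by apply Continuous.intervalIntegrable; fun_prop), hfirst,
    intervalIntegral.integral_add (by apply Continuous.intervalIntegrable; fun_prop)
      (by apply Continuous.intervalIntegrable; fun_prop),
    intervalIntegral.integral_div, intervalIntegral.integral_div, hcross]
  ring

theorem mul_integral_add_mul_integral_le {g h U V : ℝ → ℝ} {p q : ℝ} (hab : a ≤ b)
    (hg : Continuous g) (hh : Continuous h) (hU : Continuous U) (hV : Continuous V)
    (hU0 : ∀ x, 0 ≤ U x) (hV0 : ∀ x, 0 ≤ V x)
    (hq : ∀ x ∈ Icc a b, q ≤ g x) (hp : ∀ x ∈ Icc a b, p ≤ h x) :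
    q * (∫ x in a..b, U x) + p * ∫ x in a..b, V x ≤ ∫ x in a..b, (g x * U x + h x * V x) := by
  rw [← intervalIntegral.integral_const_mul, ← intervalIntegral.integral_const_mul,
    ← intervalIntegral.integral_add ((hU.const_mul q).intervalIntegrable a b)
      ((hV.const_mul p).intervalIntegrable a b)]
  refine intervalIntegral.integral_mono_on hab (by apply Continuous.intervalIntegrable; fun_prop)
    (by apply Continuous.intervalIntegrable; fun_prop) fun x hx => ?_
  exact add_le_add (mul_le_mul_of_nonneg_right (hq x hx) (hU0 x))
    (mul_le_mul_of_nonneg_right (hp x hx) (hV0 x))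

theorem two_mul_abs_le_integral_abs_deriv {g : ℝ → ℝ} (hg : ContDiff ℝ 1 g)
    (ha : g a = 0) (hb : g b = 0) {x : ℝ} (hx : x ∈ Icc a b) :
    2 * |g x| ≤ ∫ t in a..b, |deriv g t| := by
  have hd : ∀ t, HasDerivAt g (deriv g t) t :=
    fun t => (hg.differentiable one_ne_zero t).hasDerivAt
  have hint : ∀ c d, IntervalIntegrable (deriv g) volume c d :=
    fun c d => (hg.continuous_deriv le_rfl).intervalIntegrable c d
  have hleft : g x = ∫ t in a..x, deriv g t := by
    rw [integral_eq_sub_of_hasDerivAt (fun t _ => hd t) (hint a x), ha, sub_zero]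
  have hright : g x = -∫ t in x..b, deriv g t := by
    rw [integral_eq_sub_of_hasDerivAt (fun t _ => hd t) (hint x b), hb, zero_sub, neg_neg]
  rw [← integral_add_adjacent_intervals ((hint a x).abs) ((hint x b).abs), two_mul]
  nth_rewrite 1 [hleft]
  rw [hright, abs_neg]
  exact add_le_add (abs_integral_le_integral_abs hx.1) (abs_integral_le_integral_abs hx.2)

theorem integral_sq_le_sq_mul_integral_deriv_sq {y : ℝ → ℝ} (hab : a < b)
    (hy : ContDiff ℝ 1 y) (ha : y a = 0) (hb : y b = 0) :
    ∫ x in a..b, y x ^ 2 ≤ (b - a) ^ 2 * ∫ x in a..b, deriv y x ^ 2 := by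
  set L := b - a with hL
  have hL0 : 0 < L := sub_pos.2 hab
  have hy' := hy.continuous_deriv le_rfl
  have hyc := hy.continuous
  have hamgm : ∀ x, |2 * y x * deriv y x| ≤ y x ^ 2 / L + L * deriv y x ^ 2 := fun x => by
    have hminus : (y x - L * deriv y x) ^ 2 / L =
        y x ^ 2 / L + L * deriv y x ^ 2 - 2 * y x * deriv y x := by field_simp; ring
    have hplus : (y x + L * deriv y x) ^ 2 / L =
        y x ^ 2 / L + L * deriv y x ^ 2 + 2 * y x * deriv y x := by field_simp; ring
    have h1 : 0 ≤ (y x - L * deriv y x) ^ 2 / L := by positivity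
    have h2 : 0 ≤ (y x + L * deriv y x) ^ 2 / L := by positivity
    rw [abs_le]
    constructor <;> linarith
  have hpoint : ∀ x ∈ Icc a b, 2 * y x ^ 2 ≤
      (∫ t in a..b, y t ^ 2) / L + L * ∫ t in a..b, deriv y t ^ 2 := fun x hx => by
    have h := two_mul_abs_le_integral_abs_deriv (hy.pow 2) (by simp [ha]) (by simp [hb]) hx
    simp only [deriv_fun_sq_of_contDiff hy, abs_of_nonneg (sq_nonneg (y x))] at h
    refine h.trans ?_
    rw [← intervalIntegral.integral_div, ← intervalIntegral.integral_const_mul,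
      ← intervalIntegral.integral_add (by apply Continuous.intervalIntegrable; fun_prop)
        (by apply Continuous.intervalIntegrable; fun_prop)]
    exact intervalIntegral.integral_mono_on hab.le
      (by apply Continuous.intervalIntegrable; fun_prop)
      (by apply Continuous.intervalIntegrable; fun_prop) fun x _ => hamgm x
  have htotal : ∫ x in a..b, 2 * y x ^ 2 ≤ ∫ _ in a..b,
      ((∫ t in a..b, y t ^ 2) / L + L * ∫ t in a..b, deriv y t ^ 2) :=
    intervalIntegral.integral_mono_on hab.le (by apply Continuous.intervalIntegrable; fun_prop)
    (continuous_const.intervalIntegrable a b) hpoint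
  rw [intervalIntegral.integral_const_mul, intervalIntegral.integral_const, smul_eq_mul,
    ← hL] at htotal
  field_simp at htotal
  nlinarith

end Integrals

theorem integral_le_Phi_sub_Phi_zero {f : ℝ → ℝ → ℝ → ℝ} (hf : Continuous (uncurry3 f))
    {a b : ℝ} (hab : a ≤ b) {y g : ℝ → ℝ} (hy : ContDiff ℝ 1 y) (hg : Continuous g)
    (hle : ∀ x ∈ Icc a b, g x ≤ f x (y x) (deriv y x) - f x 0 0) :
    ∫ x in a..b, g x ≤ Phi f a b y - Phi f a b (fun _ => 0) := by
  have hfy : Continuous fun x => f x (y x) (deriv y x) :=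
    hf.comp (continuous_id.prodMk (hy.continuous.prodMk (hy.continuous_deriv le_rfl)))
  have hf0 : Continuous fun x => f x 0 0 :=
    hf.comp (by fun_prop : Continuous fun x : ℝ => (x, (0 : ℝ), (0 : ℝ)))
  simp only [Phi, deriv_const']
  rw [← intervalIntegral.integral_sub (hfy.intervalIntegrable a b) (hf0.intervalIntegrable a b)]
  exact intervalIntegral.integral_mono_on hab (hg.intervalIntegrable a b)
    ((hfy.sub hf0).intervalIntegrable a b) hle

theorem exists_pos_coercivity_margin {κ L p q : ℝ} (hκ0 : 0 ≤ κ) (hκ : κ < 16) (hL : 0 < L)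
    (hqp : q < p) (hq : q < 0) :
    ∃ η > 0, ∀ t s : ℝ, t ≤ L ^ 2 * s →
      (κ * p - 16 * L ^ 2 * |q|) / (2 * (κ + 16 * L ^ 2)) * (t + s) ≤
        (q * t + p * s) / 2 - η / 2 * (t + s) := by
  have hD : 0 < κ + 16 * L ^ 2 := by positivity
  refine ⟨(p - q) * (16 - κ) * L ^ 2 / ((κ + 16 * L ^ 2) * (1 + L ^ 2)),
    div_pos (by have := sub_pos.2 hqp; have := sub_pos.2 hκ; positivity) (by positivity),
    fun t s hts => ?_⟩
  have hgap : (q * t + p * s) / 2 - (p - q) * (16 - κ) * L ^ 2 / ((κ + 16 * L ^ 2) * (1 + L ^ 2))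
      / 2 * (t + s) - (κ * p - 16 * L ^ 2 * |q|) / (2 * (κ + 16 * L ^ 2)) * (t + s) =
      (p - q) * (L ^ 2 * s - t) / (2 * (1 + L ^ 2)) := by
    rw [abs_of_neg hq]
    field_simp
    ring
  have : 0 ≤ (p - q) * (L ^ 2 * s - t) / (2 * (1 + L ^ 2)) :=
    div_nonneg (mul_nonneg (sub_pos.2 hqp).le (sub_nonneg.2 hts)) (by positivity)
  linarith

theorem exists_pos_forall_le_Phi_sub_Phi_zero {f : ℝ → ℝ → ℝ → ℝ} {a b p q η : ℝ}
    (hf : ContDiff ℝ 2 (uncurry3 f)) (hfyz : ContDiff ℝ 1 (uncurry3 (fyz f)))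
    (hEL : ∀ x ∈ Icc a b, fy f x 0 0 - deriv (fun t => fz f t 0 0) x = 0) (hab : a ≤ b)
    (hp : ∀ x ∈ Icc a b, p ≤ fzz f x 0 0)
    (hq : ∀ x ∈ Icc a b, q ≤ fyy f x 0 0 - deriv (fun t => fyz f t 0 0) x) (hη : 0 < η) :
    ∃ δ > 0, ∀ y : ℝ → ℝ, ContDiff ℝ 1 y → y a = 0 → y b = 0 →
      (∀ x ∈ Icc a b, max |y x| |deriv y x| < δ) →
      (q * (∫ x in a..b, y x ^ 2) + p * ∫ x in a..b, deriv y x ^ 2) / 2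
        - η / 2 * ((∫ x in a..b, y x ^ 2) + ∫ x in a..b, deriv y x ^ 2) ≤
        Phi f a b y - Phi f a b (fun _ => 0) := by
  have hline : ContDiff ℝ 1 fun x : ℝ => (x, (0 : ℝ), (0 : ℝ)) := contDiff_id.prodMk contDiff_const
  have hA : Continuous fun x => fy f x 0 0 :=
    (continuous_uncurry3_fy (hf.of_le one_le_two)).comp hline.continuous
  have hB : ContDiff ℝ 1 fun x => fz f x 0 0 := (contDiff_uncurry3_fz hf).comp hline
  have hP : Continuous fun x => fyy f x 0 0 := (continuous_uncurry3_fyy hf).comp hline.continuous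
  have hR : ContDiff ℝ 1 fun x => fyz f x 0 0 := hfyz.comp hline
  have hS : Continuous fun x => fzz f x 0 0 := (continuous_uncurry3_fzz hf).comp hline.continuous
  obtain ⟨δ, hδ, htaylor⟩ := exists_pos_forall_partials_taylor_le hf a b hη
  refine ⟨δ, hδ, fun y hy hya hyb hsmall => ?_⟩
  have hyc := hy.continuous
  have hy' := hy.continuous_deriv le_rfl
  calc _ ≤ (∫ x in a..b, ((fyy f x 0 0 - deriv (fun t => fyz f t 0 0) x) * y x ^ 2
          + fzz f x 0 0 * deriv y x ^ 2)) / 2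
        - η / 2 * ((∫ x in a..b, y x ^ 2) + ∫ x in a..b, deriv y x ^ 2) := by
        gcongr
        exact mul_integral_add_mul_integral_le hab (by fun_prop) hS (by fun_prop) (by fun_prop)
          (fun x => sq_nonneg _) (fun x => sq_nonneg _) hq hp
    _ = ∫ x in a..b, (fy f x 0 0 * y x + fz f x 0 0 * deriv y x
          + (fyy f x 0 0 * y x ^ 2 + 2 * fyz f x 0 0 * (y x * deriv y x)
            + fzz f x 0 0 * deriv y x ^ 2) / 2
          - η / 2 * (y x ^ 2 + deriv y x ^ 2)) := by
        rw [intervalIntegral.integral_sub (by apply Continuous.intervalIntegrable; fun_prop)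
          (by apply Continuous.intervalIntegrable; fun_prop),
          intervalIntegral.integral_const_mul,
          intervalIntegral.integral_add (f := fun x => y x ^ 2) (g := fun x => deriv y x ^ 2)
          (by apply Continuous.intervalIntegrable; fun_prop)
          (by apply Continuous.intervalIntegrable; fun_prop),
          integral_taylor_poly_eq_legendre hB hP hR hS hy
            (fun x hx => sub_eq_zero.1 (hEL x (uIcc_of_le hab ▸ hx))) hya hyb]
    _ ≤ Phi f a b y - Phi f a b (fun _ => 0) :=
        integral_le_Phi_sub_Phi_zero hf.continuous hab hy (by fun_prop)
          fun x hx => htaylor x hx _ _ (hsmall x hx)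

theorem statement4_general
    (a b : ℝ) (hab : a < b)
    (f : ℝ → ℝ → ℝ → ℝ)
    (hf : ContDiff ℝ 2 (fun pt : ℝ × ℝ × ℝ => f pt.1 pt.2.1 pt.2.2))
    (hfyz : ContDiff ℝ 1 (fun pt : ℝ × ℝ × ℝ => fyz f pt.1 pt.2.1 pt.2.2))
    (hEL : ∀ x ∈ Set.Icc a b, fy f x 0 0 - deriv (fun t => fz f t 0 0) x = 0)
    (p q : ℝ)
    (hp : IsLeast ((fun x => fzz f x 0 0) '' Set.Icc a b) p)
    (hq : IsLeast ((fun x => fyy f x 0 0 - deriv (fun t => fyz f t 0 0) x) '' Set.Icc a b) q)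
    (hppos : 0 < p) (hqneg : q < 0) :
    ∃ ε > 0, ∀ y : ℝ → ℝ, ContDiff ℝ 1 y → y a = 0 → y b = 0 →
      (∀ x ∈ Set.Icc a b, max |y x| |deriv y x| < ε) →
      Phi f a b y - Phi f a b (fun _ => 0) ≥
        (Real.pi ^ 2 * p - 16 * (b - a) ^ 2 * |q|) / (2 * (Real.pi ^ 2 + 16 * (b - a) ^ 2)) *
          H1normSq a b y := by
  obtain ⟨η, hη, hmargin⟩ := exists_pos_coercivity_margin (sq_nonneg Real.pi)
    (by nlinarith [Real.pi_pos, Real.pi_lt_four]) (sub_pos.2 hab) (hqneg.trans hppos) hqneg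
  obtain ⟨δ, hδ, hΦ⟩ := exists_pos_forall_le_Phi_sub_Phi_zero hf hfyz hEL hab.le
    (fun x hx => hp.2 (mem_image_of_mem _ hx)) (fun x hx => hq.2 (mem_image_of_mem _ hx)) hη
  refine ⟨δ, hδ, fun y hy hya hyb hsmall => ?_⟩
  have hyc := hy.continuous
  have hy' := hy.continuous_deriv le_rfl
  rw [H1normSq, intervalIntegral.integral_add (by apply Continuous.intervalIntegrable; fun_prop)
    (by apply Continuous.intervalIntegrable; fun_prop), ge_iff_le]
  exact (hmargin _ _ (integral_sq_le_sq_mul_integral_deriv_sq hab hy hya hyb)).trans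
    (hΦ y hy hya hyb hsmall)

theorem statement4
    (a b : ℝ) (hab : a < b)
    (f : ℝ → ℝ → ℝ → ℝ)
    (hf : ContDiff ℝ 2 (fun pt : ℝ × ℝ × ℝ => f pt.1 pt.2.1 pt.2.2))
    (hfyz : ContDiff ℝ 1 (fun pt : ℝ × ℝ × ℝ => fyz f pt.1 pt.2.1 pt.2.2))
    (hEL : ∀ x ∈ Set.Icc a b, fy f x 0 0 - deriv (fun t => fz f t 0 0) x = 0)
    (p q : ℝ)
    (hp : IsLeast ((fun x => fzz f x 0 0) '' Set.Icc a b) p)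
    (hq : IsLeast ((fun x => fyy f x 0 0 - deriv (fun t => fyz f t 0 0) x) '' Set.Icc a b) q)
    (hppos : 0 < p) (hqneg : q < 0)
    (hlen : b - a < Real.pi / 4 * Real.sqrt (p / |q|)) :
    ∃ ε > 0, ∀ y : ℝ → ℝ, ContDiff ℝ 1 y → y a = 0 → y b = 0 →
      (∀ x ∈ Set.Icc a b, max |y x| |deriv y x| < ε) →
      Phi f a b y - Phi f a b (fun _ => 0) ≥
        (Real.pi ^ 2 * p - 16 * (b - a) ^ 2 * |q|) / (2 * (Real.pi ^ 2 + 16 * (b - a) ^ 2)) *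
          H1normSq a b y :=
  statement4_general a b hab f hf hfyz hEL p q hp hq hppos hqneg
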